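/- Let f: ℝ^d → ℝ be symmetric convex and g(x) = f_λ(xx^T - x̄x̄^T) with x̄ ≠ 0. Suppose x is a stationary point of g, meaning Vx = 0 for some V ∈ ∂f_λ(X) where X = xx^T - x̄x̄^T. Then at least one of the following holds: (i) g(x) ≤ g(x̄); (ii) x = 0; (iii) ⟨x, x̄⟩ = 0 and λ₁(V) = 0 (where λ₁(V) is the largest eigenvalue of V). -/

import Mathlib

open scoped InnerProductSpace Matrix

/-- The matrix `X = x xᵀ - xb xbᵀ`. -/
def phaseMatrix {d : ℕ} (x xb : EuclideanSpace ℝ (Fin d)) : Matrix (Fin d) (Fin d) ℝ :=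
  Matrix.of fun i j => x i * x j - xb i * xb j

theorem phaseMatrix_isHermitian {d : ℕ} (x xb : EuclideanSpace ℝ (Fin d)) :
    (phaseMatrix x xb).IsHermitian := by
  unfold Matrix.IsHermitian
  ext i j
  simp [phaseMatrix, Matrix.conjTranspose_apply, mul_comm]

/-- The spectral composite objective `g(x) = f(λ(x xᵀ - xb xbᵀ))`. -/
noncomputable def spectralObj {d : ℕ} (f : (Fin d → ℝ) → ℝ)
    (xb : EuclideanSpace ℝ (Fin d)) (x : EuclideanSpace ℝ (Fin d)) : ℝ :=
  f ((phaseMatrix_isHermitian x xb).eigenvalues)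

/-! In an orthonormal eigenbasis `U` shared by `X` and `V`, put `a = Uᵀx` and `b = Uᵀx̄`. Then `X`
being diagonal says `aᵢaⱼ = bᵢbⱼ` for `i ≠ j` and `λᵢ(X) = aᵢ² - bᵢ²`, while `Vx = 0` says
`λᵢ(V)aᵢ = 0`. The subgradient inequality at `0` reads `g(x̄) = f(0) ≥ g(x) + ∑ λᵢ(V)bᵢ²`, so
`g(x) ≤ g(x̄)` unless `λᵢ(V)bᵢ² < 0` for some `i`. Then `aᵢ = 0`, so `b` is supported on `{i}` and
`⟨x, x̄⟩ = ⟨a, b⟩ = 0`. If also `x ≠ 0`, some `aⱼ ≠ 0` gives `λⱼ(V) = 0` and `λⱼ(X) = aⱼ² > 0`;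
an index `k` with `λₖ(V) > 0` would have `aₖ = bₖ = 0`, hence `λₖ(X) = 0 < λⱼ(X)`, so `j < k`
and `λₖ(V) ≤ λⱼ(V) = 0` by monotonicity. -/

open Matrix

theorem Fintype.exists_perm_comp_eq_of_map_univ_eq {ι α : Type*} [Fintype ι] [DecidableEq α]
    {a b : ι → α} (h : Finset.univ.val.map a = Finset.univ.val.map b) :
    ∃ σ : Equiv.Perm ι, a = b ∘ σ := by
  classical
  have hfiber : ∀ c, Fintype.card {i // a i = c} = Fintype.card {i // b i = c} := fun c => by
    have := congrArg (Multiset.count c) h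
    simp only [Multiset.count_map] at this
    simpa only [Fintype.card_subtype, Finset.card_def, Finset.filter_val, eq_comm] using this
  exact ⟨Equiv.ofFiberEquiv fun c => Fintype.equivOfCardEq (hfiber c),
    funext fun i => (Equiv.ofFiberEquiv_map _ i).symm⟩

theorem Matrix.charpoly_orthogonal_conj {n R : Type*} [Fintype n] [DecidableEq n] [CommRing R]
    {U : Matrix n n R} (hU : U ∈ orthogonalGroup n R) (A : Matrix n n R) :
    (U * A * Uᵀ).charpoly = A.charpoly := by
  rw [charpoly_mul_comm, ← mul_assoc, (mem_orthogonalGroup_iff' n R).mp hU, one_mul]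

theorem Matrix.IsHermitian.exists_eigenvalues_eq_comp_perm {n : Type*} [Fintype n] [DecidableEq n]
    {A U : Matrix n n ℝ} (hA : A.IsHermitian) (hU : U ∈ orthogonalGroup n ℝ) {l : n → ℝ}
    (h : A = U * diagonal l * Uᵀ) : ∃ σ : Equiv.Perm n, hA.eigenvalues = l ∘ σ := by
  apply Fintype.exists_perm_comp_eq_of_map_univ_eq
  have hroots : A.charpoly.roots = Finset.univ.val.map l := by
    rw [h, charpoly_orthogonal_conj hU, charpoly_diagonal, Polynomial.roots_prod _ _
      (Finset.prod_ne_zero_iff.mpr fun i _ => Polynomial.X_sub_C_ne_zero (l i))]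
    simp
  simpa [hroots] using hA.roots_charpoly_eq_eigenvalues.symm

theorem Matrix.IsHermitian.apply_eigenvalues_eq_of_eq_conj {n : Type*} [Fintype n]
    [DecidableEq n] {f : (n → ℝ) → ℝ} (hf : ∀ σ : Equiv.Perm n, ∀ z, f (z ∘ σ) = f z)
    {A U : Matrix n n ℝ} (hA : A.IsHermitian) (hU : U ∈ orthogonalGroup n ℝ) {l : n → ℝ}
    (h : A = U * diagonal l * Uᵀ) : f hA.eigenvalues = f l := by
  obtain ⟨σ, hσ⟩ := hA.exists_eigenvalues_eq_comp_perm hU h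
  rw [hσ, hf]

theorem Matrix.transpose_mul_eq_of_eq_conj {n R : Type*} [Fintype n] [DecidableEq n] [CommRing R]
    {A U D : Matrix n n R} (hU : U ∈ orthogonalGroup n R) (h : A = U * D * Uᵀ) :
    Uᵀ * A = D * Uᵀ := by
  rw [h, ← mul_assoc, ← mul_assoc, (mem_orthogonalGroup_iff' n R).mp hU, one_mul]

theorem Matrix.transpose_mul_mul_eq_of_eq_conj {n R : Type*} [Fintype n] [DecidableEq n]
    [CommRing R] {A U D : Matrix n n R} (hU : U ∈ orthogonalGroup n R) (h : A = U * D * Uᵀ) :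
    Uᵀ * A * U = D := by
  rw [transpose_mul_eq_of_eq_conj hU h, mul_assoc, (mem_orthogonalGroup_iff' n R).mp hU, mul_one]

theorem Matrix.transpose_mulVec_mulVec_eq_of_eq_conj {n R : Type*} [Fintype n] [DecidableEq n]
    [CommRing R] {A U D : Matrix n n R} (hU : U ∈ orthogonalGroup n R) (h : A = U * D * Uᵀ)
    (v : n → R) : Uᵀ *ᵥ (A *ᵥ v) = D *ᵥ (Uᵀ *ᵥ v) := by
  rw [mulVec_mulVec, transpose_mul_eq_of_eq_conj hU h, mulVec_mulVec]

theorem Matrix.transpose_mul_vecMulVec_mul {n R : Type*} [Fintype n] [CommRing R]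
    (U : Matrix n n R) (u v : n → R) :
    Uᵀ * vecMulVec u v * U = vecMulVec (Uᵀ *ᵥ u) (Uᵀ *ᵥ v) := by
  rw [mul_vecMulVec, vecMulVec_mul, ← mulVec_transpose]

theorem Matrix.transpose_mulVec_dotProduct_transpose_mulVec {n R : Type*} [Fintype n]
    [DecidableEq n] [CommRing R] {U : Matrix n n R} (hU : U ∈ orthogonalGroup n R) (u v : n → R) :
    (Uᵀ *ᵥ u) ⬝ᵥ (Uᵀ *ᵥ v) = u ⬝ᵥ v := by
  rw [dotProduct_mulVec, mulVec_transpose, vecMul_vecMul,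
    (mem_orthogonalGroup_iff n R).mp hU, vecMul_one]

section PhaseRetrieval

variable {d : ℕ}

theorem phaseMatrix_eq_vecMulVec (x xb : EuclideanSpace ℝ (Fin d)) :
    phaseMatrix x xb = vecMulVec x.ofLp x.ofLp - vecMulVec xb.ofLp xb.ofLp := by
  ext i j
  simp [phaseMatrix, vecMulVec_apply]

theorem spectralObj_eq_of_phaseMatrix_eq_conj {x xb : EuclideanSpace ℝ (Fin d)}
    {f : (Fin d → ℝ) → ℝ} (hf : ∀ σ : Equiv.Perm (Fin d), ∀ z, f (z ∘ σ) = f z)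
    {U : Matrix (Fin d) (Fin d) ℝ} (hU : U ∈ orthogonalGroup (Fin d) ℝ) {l : Fin d → ℝ}
    (h : phaseMatrix x xb = U * diagonal l * Uᵀ) : spectralObj f xb x = f l :=
  (phaseMatrix_isHermitian x xb).apply_eigenvalues_eq_of_eq_conj hf hU h

theorem spectralObj_self {f : (Fin d → ℝ) → ℝ}
    (hf : ∀ σ : Equiv.Perm (Fin d), ∀ z, f (z ∘ σ) = f z) (xb : EuclideanSpace ℝ (Fin d)) :
    spectralObj f xb xb = f 0 :=
  spectralObj_eq_of_phaseMatrix_eq_conj hf (one_mem _) (by ext; simp [phaseMatrix])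

theorem transpose_mul_phaseMatrix_mul (U : Matrix (Fin d) (Fin d) ℝ)
    (x xb : EuclideanSpace ℝ (Fin d)) :
    Uᵀ * phaseMatrix x xb * U =
      vecMulVec (Uᵀ *ᵥ x.ofLp) (Uᵀ *ᵥ x.ofLp) - vecMulVec (Uᵀ *ᵥ xb.ofLp) (Uᵀ *ᵥ xb.ofLp) := by
  rw [phaseMatrix_eq_vecMulVec, mul_sub, sub_mul, transpose_mul_vecMulVec_mul,
    transpose_mul_vecMulVec_mul]

end PhaseRetrieval

section Coordinates

variable {ι : Type*} [Fintype ι] [DecidableEq ι] {a b lX lV : ι → ℝ}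

theorem sum_mul_zero_sub_eq_sum_mul_sq (hX : ∀ i j, a i * a j - b i * b j = diagonal lX i j)
    (hV : ∀ i, lV i * a i = 0) :
    ∑ i, lV i * ((0 : ι → ℝ) i - lX i) = ∑ i, lV i * b i ^ 2 := by
  refine Finset.sum_congr rfl fun i _ => ?_
  have hXi := hX i i
  rw [diagonal_apply_eq] at hXi
  rw [Pi.zero_apply]
  linear_combination lV i * hXi - a i * hV i

theorem exists_single_of_sum_mul_sq_neg (hX : ∀ i j, a i * a j - b i * b j = diagonal lX i j)
    (hV : ∀ i, lV i * a i = 0) (hneg : ∑ i, lV i * b i ^ 2 < 0) :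
    ∃ i, lV i < 0 ∧ a i = 0 ∧ ∀ j ≠ i, b j = 0 := by
  obtain ⟨i, -, hi⟩ := Finset.exists_lt_of_sum_lt
    (f := fun i => lV i * b i ^ 2) (g := 0) (by simpa using hneg)
  have hlVi : lV i < 0 := neg_of_mul_neg_left hi (sq_nonneg _)
  have hbi : b i ≠ 0 := fun h => by simp [h] at hi
  have hai : a i = 0 := (mul_eq_zero.mp (hV i)).resolve_left hlVi.ne
  refine ⟨i, hlVi, hai, fun j hj => ?_⟩
  have hXji := hX j i
  rw [diagonal_apply_ne _ hj, hai, mul_zero, zero_sub, neg_eq_zero] at hXji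
  exact (mul_eq_zero.mp hXji).resolve_right hbi

theorem iSup_eq_zero_of_single [LinearOrder ι]
    (hX : ∀ i j, a i * a j - b i * b j = diagonal lX i j) (hV : ∀ i, lV i * a i = 0)
    (hlX : Antitone lX) (hlV : Antitone lV) {i j : ι}
    (hi : lV i < 0) (hb : ∀ k ≠ i, b k = 0) (hj : a j ≠ 0) :
    ⨆ k, lV k = 0 := by
  have hlVj : lV j = 0 := (mul_eq_zero.mp (hV j)).resolve_right hj
  have hlXk : ∀ k ≠ i, lX k = a k ^ 2 := fun k hk => by
    have hXk := hX k k
    rw [diagonal_apply_eq, hb k hk] at hXk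
    linear_combination -hXk
  have hji : j ≠ i := by rintro rfl; exact hj ((mul_eq_zero.mp (hV j)).resolve_left hi.ne)
  have hle : ∀ k, lV k ≤ 0 := fun k => by
    by_contra! hpos
    have hak : a k = 0 := (mul_eq_zero.mp (hV k)).resolve_left hpos.ne'
    have hki : k ≠ i := by rintro rfl; exact hpos.not_gt hi
    have hlXkj : lX k < lX j := by
      rw [hlXk k hki, hlXk j hji, hak, zero_pow two_ne_zero]
      exact sq_pos_of_ne_zero hj
    have hjk : j < k := hlX.reflect_lt hlXkj
    exact (hlV hjk.le).not_gt (hlVj ▸ hpos)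
  have : Nonempty ι := ⟨j⟩
  exact le_antisymm (ciSup_le hle) (hlVj ▸ le_ciSup (Set.finite_range lV).bddAbove j)

theorem stationary_trichotomy_of_coords [LinearOrder ι]
    (hX : ∀ i j, a i * a j - b i * b j = diagonal lX i j) (hV : ∀ i, lV i * a i = 0)
    (hlX : Antitone lX) (hlV : Antitone lV) :
    0 ≤ ∑ i, lV i * b i ^ 2 ∨ a = 0 ∨ (a ⬝ᵥ b = 0 ∧ ⨆ i, lV i = 0) := by
  refine or_iff_not_imp_left.mpr fun hneg => or_iff_not_imp_left.mpr fun ha => ?_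
  obtain ⟨i, hi, hai, hb⟩ := exists_single_of_sum_mul_sq_neg hX hV (not_le.mp hneg)
  obtain ⟨j, hj⟩ := Function.ne_iff.mp ha
  refine ⟨Finset.sum_eq_zero fun k _ => ?_, iSup_eq_zero_of_single hX hV hlX hlV hi hb hj⟩
  by_cases hk : k = i
  · simp [hk, hai]
  · simp [hb k hk]

end Coordinates

theorem stationary_point_inclusion_general {d : ℕ}
    (f : (Fin d → ℝ) → ℝ)
    (hsymm : ∀ σ : Equiv.Perm (Fin d), ∀ z : Fin d → ℝ, f (z ∘ σ) = f z)
    (xb : EuclideanSpace ℝ (Fin d))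
    (x : EuclideanSpace ℝ (Fin d))
    (U : Matrix (Fin d) (Fin d) ℝ) (hU : U ∈ Matrix.orthogonalGroup (Fin d) ℝ)
    (lX lV : Fin d → ℝ) (hlX : Antitone lX) (hlV : Antitone lV)
    (hdecX : phaseMatrix x xb = U * Matrix.diagonal lX * Uᵀ)
    (V : Matrix (Fin d) (Fin d) ℝ) (hdecV : V = U * Matrix.diagonal lV * Uᵀ)
    (hsub : ∀ z : Fin d → ℝ, f z ≥ f lX + ∑ i, lV i * (z i - lX i))
    (hstat : Matrix.toEuclideanLin V x = 0) :
    spectralObj f xb x ≤ spectralObj f xb xb ∨ x = 0 ∨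
      (⟪x, xb⟫_ℝ = 0 ∧ (⨆ i, lV i) = 0) := by
  set a := Uᵀ *ᵥ x.ofLp
  set b := Uᵀ *ᵥ xb.ofLp
  have hX : ∀ i j, a i * a j - b i * b j = diagonal lX i j := fun i j => by
    rw [← (transpose_mul_mul_eq_of_eq_conj hU hdecX), transpose_mul_phaseMatrix_mul]
    rfl
  have hV : ∀ i, lV i * a i = 0 := fun i => by
    have hVx : V *ᵥ x.ofLp = 0 := congrArg WithLp.ofLp hstat
    simpa [mulVec_diagonal, hVx] using
      congrFun (transpose_mulVec_mulVec_eq_of_eq_conj hU hdecV x.ofLp) i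
  rcases stationary_trichotomy_of_coords hX hV hlX hlV with hpos | ha | ⟨hab, hsup⟩
  · left
    have h0 := hsub 0
    rw [sum_mul_zero_sub_eq_sum_mul_sq hX hV] at h0
    rw [spectralObj_eq_of_phaseMatrix_eq_conj hsymm hU hdecX, spectralObj_self hsymm]
    linarith
  · right; left
    have hxa : x.ofLp = U *ᵥ a := by
      rw [mulVec_mulVec, (mem_orthogonalGroup_iff _ ℝ).mp hU, one_mulVec]
    rw [ha, mulVec_zero] at hxa
    exact (WithLp.ofLp_eq_zero 2).mp hxa
  · right; right
    refine ⟨?_, hsup⟩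
    rw [EuclideanSpace.inner_eq_star_dotProduct, dotProduct_comm, ← hab,
      transpose_mulVec_dotProduct_transpose_mulVec hU]
    rfl

/-- Stationary point inclusion: if `Vx = 0` for some `V ∈ ∂f_λ(X)` (presented by a
simultaneous ordered spectral decomposition with `X = x xᵀ - xb xbᵀ` and the convex
subgradient inclusion `λ(V) ∈ ∂f(λ(X))`), then `g(x) ≤ g(xb)`, or `x = 0`, or
`⟨x, xb⟩ = 0` and `λ₁(V) = 0`. -/
theorem stationary_point_inclusion {d : ℕ} (hd : 0 < d)
    (f : (Fin d → ℝ) → ℝ) (hconv : ConvexOn ℝ Set.univ f)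
    (hsymm : ∀ σ : Equiv.Perm (Fin d), ∀ z : Fin d → ℝ, f (z ∘ σ) = f z)
    (xb : EuclideanSpace ℝ (Fin d)) (hxb : xb ≠ 0)
    (x : EuclideanSpace ℝ (Fin d))
    (U : Matrix (Fin d) (Fin d) ℝ) (hU : U ∈ Matrix.orthogonalGroup (Fin d) ℝ)
    (lX lV : Fin d → ℝ) (hlX : Antitone lX) (hlV : Antitone lV)
    (hdecX : phaseMatrix x xb = U * Matrix.diagonal lX * Uᵀ)
    (V : Matrix (Fin d) (Fin d) ℝ) (hdecV : V = U * Matrix.diagonal lV * Uᵀ)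
    (hsub : ∀ z : Fin d → ℝ, f z ≥ f lX + ∑ i, lV i * (z i - lX i))
    (hstat : Matrix.toEuclideanLin V x = 0) :
    spectralObj f xb x ≤ spectralObj f xb xb ∨ x = 0 ∨
      (⟪x, xb⟫_ℝ = 0 ∧ (⨆ i, lV i) = 0) :=
  stationary_point_inclusion_general f hsymm xb x U hU lX lV hlX hlV hdecX V hdecV hsub hstat
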